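/- Newton–Maclaurin inequality: for κ ∈ ℝⁿ with all normalized elementary symmetric polynomials H₀,...,H_{k+1} evaluated at κ, if κ lies in the Gårding cone Γ_{k+1} (or in particular if all κᵢ > 0), then H_{k-1}(κ) H_{k+1}(κ) ≤ H_k(κ)² for 1 ≤ k ≤ n-1. -/
import Mathlib

open Polynomial

private def AllRealRoots (P : Polynomial ℝ) : Prop :=
  Multiset.card P.roots = P.natDegree

private lemma allRealRoots_derivative {P : Polynomial ℝ} (h : AllRealRoots P) :
    AllRealRoots (derivative P) := by
  by_cases h0 : P.natDegree = 0
  · rw [derivative_of_natDegree_zero h0]; simp [AllRealRoots]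
  · have hd : (derivative P).natDegree = P.natDegree - 1 :=
      natDegree_eq_of_degree_eq_some (degree_derivative_eq P (Nat.pos_of_ne_zero h0))
    have h1 := Polynomial.card_roots' (derivative P)
    have h2 := P.card_roots_le_derivative
    unfold AllRealRoots at h ⊢
    omega

private lemma allRealRoots_iterate {P : Polynomial ℝ} (h : AllRealRoots P) (m : ℕ) :
    AllRealRoots (derivative^[m] P) := by
  induction m with
  | zero => simpa
  | succ m ih => rw [Function.iterate_succ_apply']; exact allRealRoots_derivative ih

private lemma natDegree_iterate_derivative_eq {P : Polynomial ℝ} {m : ℕ} (hm : m ≤ P.natDegree) :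
    (derivative^[m] P).natDegree = P.natDegree - m := by
  induction m with
  | zero => simp
  | succ m ih =>
    have h1 : (derivative^[m] P).natDegree = P.natDegree - m := ih (by omega)
    rw [Function.iterate_succ_apply',
      natDegree_eq_of_degree_eq_some (degree_derivative_eq _ (by omega)), h1]
    omega

private lemma reverse_multiset_prod (M : Multiset ℝ) (hM : ∀ r ∈ M, r ≠ 0) :
    ((M.map fun r => X - C r).prod).reverse
      = C ((M.map fun r => -r).prod) * (M.map fun r => X - C r⁻¹).prod := by
  induction M using Multiset.induction with
  | empty => simp [reverse]
  | cons r M ih =>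
    have hr : r ≠ 0 := hM r (Multiset.mem_cons_self _ _)
    simp only [Multiset.map_cons, Multiset.prod_cons]
    rw [reverse_mul_of_domain, ih fun x hx => hM x (Multiset.mem_cons_of_mem hx)]
    have hrev : (X - C r).reverse = C (-r) * (X - C r⁻¹) := by
      have h1 : (X - C r) = X + C (-r) := by rw [map_neg, sub_eq_add_neg]
      have h2 : C (-r) * C r⁻¹ = -1 := by
        rw [← C_mul, neg_mul, mul_inv_cancel₀ hr, map_neg, map_one]
      rw [h1, reverse_add_C, mul_sub, h2]
      simp [reverse]
      ring
    rw [hrev, map_mul]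
    ring

private lemma allRealRoots_reverse {P : Polynomial ℝ} (h : AllRealRoots P)
    (h0 : P.coeff 0 ≠ 0) :
    AllRealRoots P.reverse ∧ P.reverse.natDegree = P.natDegree := by
  have hP : P ≠ 0 := fun hh => h0 (by simp [hh])
  have htd : P.natTrailingDegree = 0 := natTrailingDegree_eq_zero.mpr (Or.inr h0)
  have hdeg : P.reverse.natDegree = P.natDegree := by
    rw [reverse_natDegree, htd, Nat.sub_zero]
  have hroots0 : ∀ r ∈ P.roots, r ≠ 0 := by
    intro r hr hr0
    subst hr0
    have := (mem_roots'.mp hr).2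
    rw [IsRoot, ← coeff_zero_eq_eval_zero] at this
    exact h0 this
  have hfact := C_leadingCoeff_mul_prod_multiset_X_sub_C (p := P) h
  have hrev : P.reverse
      = C (P.leadingCoeff * (P.roots.map fun r => -r).prod)
        * (P.roots.map fun r => X - C r⁻¹).prod := by
    conv_lhs => rw [← hfact]
    rw [reverse_mul_of_domain, reverse_C, reverse_multiset_prod _ hroots0, ← mul_assoc, ← C_mul]
  have hc : P.leadingCoeff * (P.roots.map fun r => -r).prod ≠ 0 := by
    refine mul_ne_zero (leadingCoeff_ne_zero.mpr hP) (Multiset.prod_ne_zero ?_)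
    intro h0'
    obtain ⟨r, hr, hr'⟩ := Multiset.mem_map.mp h0'
    exact hroots0 r hr (neg_eq_zero.mp hr')
  refine ⟨?_, hdeg⟩
  have hroots : P.reverse.roots = P.roots.map fun r => r⁻¹ := by
    rw [hrev, roots_C_mul _ hc,
      show (Multiset.map (fun r => X - C r⁻¹) P.roots)
          = Multiset.map (fun a => X - C a) (P.roots.map fun r => r⁻¹) by
        rw [Multiset.map_map]; rfl,
      roots_multiset_prod_X_sub_C]
  unfold AllRealRoots
  rw [hroots, Multiset.card_map, hdeg]
  exact h

open Finset in
/-- The normalized elementary symmetric polynomial H_k(κ) = σ_k(κ)/C(n,k). -/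
noncomputable def normalizedElemSymm (n : ℕ) (k : ℕ) (κ : Fin n → ℝ) : ℝ :=
  (∑ s ∈ Finset.univ.powersetCard k, ∏ i ∈ s, κ i) / (n.choose k)

/-- Newton–Maclaurin inequality: for κ with all entries positive and 1 ≤ k ≤ n-1,
H_{k-1}(κ) H_{k+1}(κ) ≤ H_k(κ)². -/
theorem newton_maclaurin (n k : ℕ) (hk1 : 1 ≤ k) (hkn : k + 1 ≤ n)
    (κ : Fin n → ℝ) (hκ : ∀ i, 0 < κ i) :
    normalizedElemSymm n (k - 1) κ * normalizedElemSymm n (k + 1) κ ≤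
      normalizedElemSymm n k κ ^ 2 := by
  obtain ⟨j, rfl⟩ : ∃ j, k = j + 1 := ⟨k - 1, by omega⟩
  obtain ⟨m, rfl⟩ : ∃ m, n = j + m + 2 := ⟨n - j - 2, by omega⟩
  -- the elementary symmetric functions
  set e : ℕ → ℝ := fun i => ∑ s ∈ Finset.univ.powersetCard i, ∏ x ∈ s, κ x with he
  have hepos : ∀ i, i ≤ j + m + 2 → 0 < e i := by
    intro i hi
    refine Finset.sum_pos (fun s _ => Finset.prod_pos fun x _ => hκ x) ?_
    exact Finset.powersetCard_nonempty_of_le (by simpa using hi)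
  -- the polynomial with roots -κ i
  set p : Polynomial ℝ := ∏ i : Fin (j + m + 2), (Polynomial.X + Polynomial.C (κ i)) with hp
  have hpM : p = ((Finset.univ.val.map fun i => -κ i).map
      fun a => Polynomial.X - Polynomial.C a).prod := by
    rw [Multiset.map_map, hp, Finset.prod_eq_multiset_prod]
    congr 1
    apply Multiset.map_congr rfl
    intro x _
    simp [sub_neg_eq_add]
  have hpdeg : p.natDegree = j + m + 2 := by
    rw [hpM, Polynomial.natDegree_multiset_prod_X_sub_C_eq_card, Multiset.card_map]
    simp
  have hproots : AllRealRoots p := by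
    unfold AllRealRoots
    rw [hpdeg, hpM, Polynomial.roots_multiset_prod_X_sub_C, Multiset.card_map]
    simp
  have hpcoeff : ∀ i, i ≤ j + m + 2 → p.coeff i = e (j + m + 2 - i) := by
    intro i hi
    rw [hp, Finset.prod_X_add_C_coeff _ _ (by simpa using hi)]
    simp [he]
  -- first differentiation: m times
  set q : Polynomial ℝ := Polynomial.derivative^[m] p with hq
  have hqdeg : q.natDegree = j + 2 := by
    rw [hq, natDegree_iterate_derivative_eq (by omega), hpdeg]; omega
  have hqroots : AllRealRoots q := allRealRoots_iterate hproots m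
  have hqcoeff : ∀ i, i ≤ j + 2 →
      q.coeff i = ((i + m).descFactorial m : ℝ) * e (j + 2 - i) := by
    intro i hi
    rw [hq, Polynomial.coeff_iterate_derivative, nsmul_eq_mul,
      hpcoeff (i + m) (by omega)]
    congr 2
    omega
  have hq0 : q.coeff 0 ≠ 0 := by
    rw [hqcoeff 0 (by omega)]
    have h1 := hepos (j + 2) (by omega)
    have h2 : (0 : ℝ) < ((0 + m).descFactorial m : ℝ) := by
      have h0 : (0 + m).descFactorial m ≠ 0 := by
        rw [Ne, Nat.descFactorial_eq_zero_iff_lt]; omega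
      exact_mod_cast Nat.pos_of_ne_zero h0
    simp only [Nat.sub_zero]
    exact ne_of_gt (mul_pos h2 (by simpa using h1))
  -- reverse
  obtain ⟨hrroots, hrdeg⟩ := allRealRoots_reverse hqroots hq0
  rw [hqdeg] at hrdeg
  set r : Polynomial ℝ := q.reverse with hr
  have hrcoeff : ∀ i, i ≤ j + 2 → r.coeff i = q.coeff (j + 2 - i) := by
    intro i hi
    rw [hr, Polynomial.coeff_reverse, hqdeg, Polynomial.revAt_le hi]
  -- second differentiation: j times
  set s : Polynomial ℝ := Polynomial.derivative^[j] r with hs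
  have hsdeg : s.natDegree = 2 := by
    rw [hs, natDegree_iterate_derivative_eq (by rw [hrdeg]; omega), hrdeg]
    omega
  have hsroots : AllRealRoots s := allRealRoots_iterate hrroots j
  have hscoeff : ∀ i, i ≤ 2 →
      s.coeff i = ((i + j).descFactorial j : ℝ) * q.coeff (2 - i) := by
    intro i hi
    rw [hs, Polynomial.coeff_iterate_derivative, nsmul_eq_mul,
      hrcoeff (i + j) (by omega)]
    congr 2
    omega
  -- s has a real root
  have hs2 : Multiset.card s.roots = 2 := by rw [hsroots, hsdeg]
  obtain ⟨x, hx⟩ := Multiset.card_pos_iff_exists_mem.mp (by rw [hs2]; omega)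
  have hxroot : s.eval x = 0 := (Polynomial.mem_roots'.mp hx).2
  have heval : s.coeff 0 + s.coeff 1 * x + s.coeff 2 * x ^ 2 = 0 := by
    rw [Polynomial.eval_eq_sum_range, hsdeg] at hxroot
    simp [Finset.sum_range_succ] at hxroot
    nlinarith [hxroot]
  -- discriminant inequality
  have hdisc : 4 * s.coeff 0 * s.coeff 2 ≤ s.coeff 1 ^ 2 := by
    have key : s.coeff 1 ^ 2 - 4 * s.coeff 0 * s.coeff 2
        = (2 * s.coeff 2 * x + s.coeff 1) ^ 2 := by
      linear_combination (-4 * s.coeff 2) * heval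
    nlinarith [sq_nonneg (2 * s.coeff 2 * x + s.coeff 1), key]
  -- unpack the coefficients
  rw [hscoeff 0 (by omega), hscoeff 1 (by omega), hscoeff 2 (by omega),
    hqcoeff 2 (by omega), hqcoeff 1 (by omega), hqcoeff 0 (by omega)] at hdisc
  norm_num at hdisc
  -- descFactorial values
  have dj0 : (j.descFactorial j : ℝ) = j.factorial := by
    rw [Nat.descFactorial_self]
  have dj1 : ((1 + j).descFactorial j : ℝ) = (j + 1).factorial := by
    have h := Nat.factorial_mul_descFactorial (show j ≤ 1 + j by omega)
    have h2 : 1 + j - j = 1 := by omega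
    rw [h2] at h
    simp only [Nat.factorial_one, one_mul] at h
    rw [h, Nat.add_comm]
  have dj2 : 2 * ((2 + j).descFactorial j : ℝ) = (j + 2).factorial := by
    have h := Nat.factorial_mul_descFactorial (show j ≤ 2 + j by omega)
    have h2 : 2 + j - j = 2 := by omega
    rw [h2] at h
    have h3 : 2 * (2 + j).descFactorial j = (2 + j).factorial := by
      simpa [Nat.factorial] using h
    have h4 : (2 : ℝ) * ((2 + j).descFactorial j : ℝ) = ((2 + j).factorial : ℝ) := by
      exact_mod_cast congrArg (Nat.cast (R := ℝ)) h3
    rw [h4, Nat.add_comm]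
  have dm1 : ((1 + m).descFactorial m : ℝ) = (m + 1).factorial := by
    have h := Nat.factorial_mul_descFactorial (show m ≤ 1 + m by omega)
    have h2 : 1 + m - m = 1 := by omega
    rw [h2] at h
    simp only [Nat.factorial_one, one_mul] at h
    rw [h, Nat.add_comm]
  have dm2 : 2 * ((2 + m).descFactorial m : ℝ) = (m + 2).factorial := by
    have h := Nat.factorial_mul_descFactorial (show m ≤ 2 + m by omega)
    have h2 : 2 + m - m = 2 := by omega
    rw [h2] at h
    have h3 : 2 * (2 + m).descFactorial m = (2 + m).factorial := by
      simpa [Nat.factorial] using h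
    have h4 : (2 : ℝ) * ((2 + m).descFactorial m : ℝ) = ((2 + m).factorial : ℝ) := by
      exact_mod_cast congrArg (Nat.cast (R := ℝ)) h3
    rw [h4, Nat.add_comm]
  have dm0 : (m.descFactorial m : ℝ) = m.factorial := by
    rw [Nat.descFactorial_self]
  -- the discriminant inequality in factorial form
  have D : (j.factorial : ℝ) * (m + 2).factorial * (j + 2).factorial * m.factorial
      * (e j * e (j + 2))
      ≤ (((j + 1).factorial : ℝ) * (m + 1).factorial) ^ 2 * e (j + 1) ^ 2 := by
    calc (j.factorial : ℝ) * (m + 2).factorial * (j + 2).factorial * m.factorial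
        * (e j * e (j + 2))
        = 4 * ((j.descFactorial j : ℝ) * (((2 + m).descFactorial m : ℝ) * e j)) *
          (((2 + j).descFactorial j : ℝ) * ((m.descFactorial m : ℝ) * e (j + 2))) := by
          rw [← dj0, ← dm0, ← dj2, ← dm2]; ring
      _ ≤ (((1 + j).descFactorial j : ℝ) * (((1 + m).descFactorial m : ℝ) * e (j + 1))) ^ 2 :=
          hdisc
      _ = (((j + 1).factorial : ℝ) * (m + 1).factorial) ^ 2 * e (j + 1) ^ 2 := by
          rw [dj1, dm1]; ring
  -- choose identities
  have I1 : ((j + m + 2).choose j : ℝ) * ((j.factorial : ℝ) * (m + 2).factorial)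
      = ((j + m + 2).factorial : ℝ) := by
    have h := Nat.choose_mul_factorial_mul_factorial (show j ≤ j + m + 2 by omega)
    rw [show j + m + 2 - j = m + 2 by omega] at h
    push_cast [← h]; ring
  have I2 : ((j + m + 2).choose (j + 1) : ℝ)
      * (((j + 1).factorial : ℝ) * (m + 1).factorial) = ((j + m + 2).factorial : ℝ) := by
    have h := Nat.choose_mul_factorial_mul_factorial (show j + 1 ≤ j + m + 2 by omega)
    rw [show j + m + 2 - (j + 1) = m + 1 by omega] at h
    push_cast [← h]; ring
  have I3 : ((j + m + 2).choose (j + 2) : ℝ)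
      * (((j + 2).factorial : ℝ) * m.factorial) = ((j + m + 2).factorial : ℝ) := by
    have h := Nat.choose_mul_factorial_mul_factorial (show j + 2 ≤ j + m + 2 by omega)
    rw [show j + m + 2 - (j + 2) = m by omega] at h
    push_cast [← h]; ring
  -- final assembly
  have hC1 : (0 : ℝ) < ((j + m + 2).choose j : ℝ) := by
    exact_mod_cast Nat.choose_pos (show j ≤ j + m + 2 by omega)
  have hC2 : (0 : ℝ) < ((j + m + 2).choose (j + 1) : ℝ) := by
    exact_mod_cast Nat.choose_pos (show j + 1 ≤ j + m + 2 by omega)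
  have hC3 : (0 : ℝ) < ((j + m + 2).choose (j + 2) : ℝ) := by
    exact_mod_cast Nat.choose_pos (show j + 2 ≤ j + m + 2 by omega)
  have hgoal : e j * e (j + 2) * ((j + m + 2).choose (j + 1) : ℝ) ^ 2
      ≤ e (j + 1) ^ 2 * (((j + m + 2).choose j : ℝ) * ((j + m + 2).choose (j + 2) : ℝ)) := by
    have Fpos : (0 : ℝ) < (((j + 1).factorial : ℝ) * (m + 1).factorial) ^ 2
        * ((j.factorial : ℝ) * (m + 2).factorial)
        * (((j + 2).factorial : ℝ) * m.factorial) := by positivity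
    refine le_of_mul_le_mul_right ?_ Fpos
    calc e j * e (j + 2) * ((j + m + 2).choose (j + 1) : ℝ) ^ 2
          * ((((j + 1).factorial : ℝ) * (m + 1).factorial) ^ 2
            * ((j.factorial : ℝ) * (m + 2).factorial)
            * (((j + 2).factorial : ℝ) * m.factorial))
        = (((j + m + 2).choose (j + 1) : ℝ)
            * (((j + 1).factorial : ℝ) * (m + 1).factorial)) ^ 2
          * ((j.factorial : ℝ) * (m + 2).factorial * (j + 2).factorial * m.factorial
            * (e j * e (j + 2))) := by ring
      _ = ((j + m + 2).factorial : ℝ) ^ 2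
          * ((j.factorial : ℝ) * (m + 2).factorial * (j + 2).factorial * m.factorial
            * (e j * e (j + 2))) := by rw [I2]
      _ ≤ ((j + m + 2).factorial : ℝ) ^ 2
          * ((((j + 1).factorial : ℝ) * (m + 1).factorial) ^ 2 * e (j + 1) ^ 2) := by
          exact mul_le_mul_of_nonneg_left D (by positivity)
      _ = (((j + m + 2).choose j : ℝ) * ((j.factorial : ℝ) * (m + 2).factorial))
          * (((j + m + 2).choose (j + 2) : ℝ) * (((j + 2).factorial : ℝ) * m.factorial))
          * ((((j + 1).factorial : ℝ) * (m + 1).factorial) ^ 2 * e (j + 1) ^ 2) := by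
          rw [I1, I3]; ring
      _ = e (j + 1) ^ 2
          * (((j + m + 2).choose j : ℝ) * ((j + m + 2).choose (j + 2) : ℝ))
          * ((((j + 1).factorial : ℝ) * (m + 1).factorial) ^ 2
            * ((j.factorial : ℝ) * (m + 2).factorial)
            * (((j + 2).factorial : ℝ) * m.factorial)) := by ring
  -- conclude
  unfold normalizedElemSymm
  simp only [Nat.add_sub_cancel]
  rw [div_mul_div_comm, div_pow, div_le_div_iff₀ (by positivity) (by positivity)]
  calc (∑ s ∈ Finset.univ.powersetCard j, ∏ x ∈ s, κ x)
        * (∑ s ∈ Finset.univ.powersetCard (j + 1 + 1), ∏ x ∈ s, κ x)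
        * ((j + m + 2).choose (j + 1) : ℝ) ^ 2
      = e j * e (j + 2) * ((j + m + 2).choose (j + 1) : ℝ) ^ 2 := by rw [he]
    _ ≤ e (j + 1) ^ 2
        * (((j + m + 2).choose j : ℝ) * ((j + m + 2).choose (j + 2) : ℝ)) := hgoal
    _ = (∑ s ∈ Finset.univ.powersetCard (j + 1), ∏ x ∈ s, κ x) ^ 2
        * (((j + m + 2).choose j : ℝ) * ((j + m + 2).choose (j + 1 + 1) : ℝ)) := by rw [he]
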